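/- Let w be a weight on ℝ, k ∈ ℤ, and let u = w_k be the function equal on each dyadic interval I of length 2^{-k} to the average of w over I, i.e. u = Σ_{I ∈ 𝒫_k} ⟨w⟩_I χ_I. Then for every bounded interval J with |J| > 2^{-k}, one has ⟨u⟩_J ≤ 3⟨w⟩_{J*}, where J* is the union of partition intervals of 𝒫_k intersecting J. -/

import Mathlib

/-!
On each dyadic interval `I` of generation `k`, `u` is the constant `⟨w⟩_I`, so `∫_I u = ∫_I w`.
Since `J*` is a finite disjoint union of such intervals, `∫_J u ≤ ∫_{J*} u = ∫_{J*} w`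
(using `u ≥ 0`). Every point of `J*` lies within `2^{-k}` of `J`, so
`|J| ≤ |J*| ≤ |J| + 2·2^{-k} < 3|J|`.
-/

open MeasureTheory

/-- The dyadic interval of generation `k` and index `j`: `[j·2^{-k}, (j+1)·2^{-k})`. -/
def dyadicInterval (k : ℤ) (j : ℤ) : Set ℝ :=
  Set.Ico ((j : ℝ) * (2 : ℝ) ^ (-k)) (((j : ℝ) + 1) * (2 : ℝ) ^ (-k))

/-- `J*`: the union of the dyadic intervals of generation `k` that intersect `J`. -/
def dyadicEnvelope (k : ℤ) (J : Set ℝ) : Set ℝ :=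
  ⋃ (j : ℤ) (_ : (dyadicInterval k j ∩ J).Nonempty), dyadicInterval k j

/-- The averaging of `w` at scale `2^{-k}`: `u = Σ_{I∈𝒫_k} ⟨w⟩_I χ_I`, i.e. at `x` the value
is the average of `w` over the dyadic interval of generation `k` containing `x`. -/
noncomputable def dyadicAvg (w : ℝ → ℝ) (k : ℤ) (x : ℝ) : ℝ :=
  ((2 : ℝ) ^ (-k))⁻¹ *
    ∫ t in dyadicInterval k ⌊x / (2 : ℝ) ^ (-k)⌋, w t

open Set

section Dyadic

variable (k : ℤ)

lemma mem_dyadicInterval_iff {j : ℤ} {x : ℝ} :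
    x ∈ dyadicInterval k j ↔ ⌊x / (2 : ℝ) ^ (-k)⌋ = j := by
  have hδ : (0 : ℝ) < 2 ^ (-k) := zpow_pos two_pos _
  rw [dyadicInterval, mem_Ico, Int.floor_eq_iff, le_div_iff₀ hδ, div_lt_iff₀ hδ]

lemma mem_dyadicInterval_floor (x : ℝ) : x ∈ dyadicInterval k ⌊x / (2 : ℝ) ^ (-k)⌋ :=
  (mem_dyadicInterval_iff k).2 rfl

lemma pairwise_disjoint_dyadicInterval : Pairwise (Function.onFun Disjoint (dyadicInterval k)) :=
  fun _ _ hij => Set.disjoint_left.2 fun _ hi hj =>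
    hij (((mem_dyadicInterval_iff k).1 hi).symm.trans ((mem_dyadicInterval_iff k).1 hj))

lemma measurableSet_dyadicInterval (j : ℤ) : MeasurableSet (dyadicInterval k j) :=
  measurableSet_Ico

lemma volume_dyadicInterval (j : ℤ) :
    volume (dyadicInterval k j) = ENNReal.ofReal ((2 : ℝ) ^ (-k)) := by
  rw [dyadicInterval, Real.volume_Ico]
  ring_nf

lemma measurableSet_dyadicEnvelope (J : Set ℝ) : MeasurableSet (dyadicEnvelope k J) :=
  .iUnion fun j => .iUnion fun _ => measurableSet_dyadicInterval k j

lemma subset_dyadicEnvelope (J : Set ℝ) : J ⊆ dyadicEnvelope k J := fun x hx =>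
  mem_biUnion (x := ⌊x / (2 : ℝ) ^ (-k)⌋) ⟨x, mem_dyadicInterval_floor k x, hx⟩
    (mem_dyadicInterval_floor k x)

lemma dyadicEnvelope_Ioc_subset (a b : ℝ) :
    dyadicEnvelope k (Ioc a b) ⊆ Ioo (a - 2 ^ (-k)) (b + 2 ^ (-k)) := by
  simp only [dyadicEnvelope, iUnion_subset_iff]
  rintro j ⟨y, ⟨hjy, hyj⟩, hay, hyb⟩ x ⟨hjx, hxj⟩
  constructor <;> nlinarith

lemma volume_dyadicEnvelope_Ioc_le (a b : ℝ) :
    volume (dyadicEnvelope k (Ioc a b)) ≤ ENNReal.ofReal (b - a + 2 * 2 ^ (-k)) := by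
  refine (measure_mono (dyadicEnvelope_Ioc_subset k a b)).trans_eq ?_
  rw [Real.volume_Ioo]
  ring_nf

lemma exists_dyadicEnvelope_eq_biUnion {J : Set ℝ} (hJ : Bornology.IsBounded J) :
    ∃ t : Finset ℤ, dyadicEnvelope k J = ⋃ j ∈ t, dyadicInterval k j := by
  have hfin : {j | (dyadicInterval k j ∩ J).Nonempty}.Finite := by
    refine (finite_Icc ⌊sInf J / (2 : ℝ) ^ (-k)⌋ ⌊sSup J / (2 : ℝ) ^ (-k)⌋).subset ?_
    rintro j ⟨y, hyj, hyJ⟩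
    have hδ : (0 : ℝ) ≤ 2 ^ (-k) := (zpow_pos two_pos _).le
    obtain ⟨hinf, hsup⟩ := hJ.subset_Icc_sInf_sSup hyJ
    rw [← (mem_dyadicInterval_iff k).1 hyj]
    exact ⟨Int.floor_mono (div_le_div_of_nonneg_right hinf hδ),
      Int.floor_mono (div_le_div_of_nonneg_right hsup hδ)⟩
  exact ⟨hfin.toFinset, by simp [dyadicEnvelope]⟩

end Dyadic

section Average

variable (w : ℝ → ℝ) (k : ℤ)

lemma dyadicAvg_eq_of_mem {j : ℤ} {x : ℝ} (hx : x ∈ dyadicInterval k j) :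
    dyadicAvg w k x = ((2 : ℝ) ^ (-k))⁻¹ * ∫ t in dyadicInterval k j, w t := by
  rw [dyadicAvg, (mem_dyadicInterval_iff k).1 hx]

lemma dyadicAvg_nonneg (hw : ∀ x, 0 ≤ w x) (x : ℝ) : 0 ≤ dyadicAvg w k x :=
  mul_nonneg (inv_nonneg.2 (zpow_pos two_pos _).le)
    (setIntegral_nonneg (measurableSet_dyadicInterval k _) fun t _ => hw t)

lemma integrableOn_dyadicAvg_dyadicInterval (j : ℤ) :
    IntegrableOn (dyadicAvg w k) (dyadicInterval k j) :=
  (integrableOn_const (by simp [volume_dyadicInterval])).congr_fun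
    (fun _ hx => (dyadicAvg_eq_of_mem w k hx).symm) (measurableSet_dyadicInterval k _)

lemma setIntegral_dyadicAvg_dyadicInterval (j : ℤ) :
    ∫ x in dyadicInterval k j, dyadicAvg w k x = ∫ x in dyadicInterval k j, w x := by
  have hδ : (0 : ℝ) < 2 ^ (-k) := zpow_pos two_pos _
  rw [setIntegral_congr_fun (measurableSet_dyadicInterval k _)
      fun _ hx => dyadicAvg_eq_of_mem w k hx,
    setIntegral_const, measureReal_def, volume_dyadicInterval, ENNReal.toReal_ofReal hδ.le,
    smul_eq_mul, ← mul_assoc, mul_inv_cancel₀ hδ.ne', one_mul]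

lemma setIntegral_dyadicAvg_biUnion (hw : LocallyIntegrable w volume) (t : Finset ℤ) :
    ∫ x in ⋃ j ∈ t, dyadicInterval k j, dyadicAvg w k x =
      ∫ x in ⋃ j ∈ t, dyadicInterval k j, w x := by
  have hdisj := (pairwise_disjoint_dyadicInterval k).set_pairwise (t : Set ℤ)
  rw [integral_biUnion_finset t (fun _ _ => measurableSet_dyadicInterval k _) hdisj
      fun j _ => integrableOn_dyadicAvg_dyadicInterval w k j,
    integral_biUnion_finset t (fun _ _ => measurableSet_dyadicInterval k _) hdisj
      fun _ _ => (hw.integrableOn_isCompact isCompact_Icc).mono_set Ico_subset_Icc_self]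
  exact Finset.sum_congr rfl fun j _ => setIntegral_dyadicAvg_dyadicInterval w k j

lemma setIntegral_dyadicAvg_le_setIntegral_dyadicEnvelope (hw_nonneg : ∀ x, 0 ≤ w x)
    (hw_loc : LocallyIntegrable w volume) {J : Set ℝ} (hJ : Bornology.IsBounded J) :
    ∫ x in J, dyadicAvg w k x ≤ ∫ x in dyadicEnvelope k J, w x := by
  obtain ⟨t, ht⟩ := exists_dyadicEnvelope_eq_biUnion k hJ
  have hJ_sub : J ⊆ ⋃ j ∈ t, dyadicInterval k j := ht ▸ subset_dyadicEnvelope k J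
  rw [ht, ← setIntegral_dyadicAvg_biUnion w k hw_loc t]
  exact setIntegral_mono_set
    (integrableOn_finset_iUnion.2 fun j _ => integrableOn_dyadicAvg_dyadicInterval w k j)
    (.of_forall (dyadicAvg_nonneg w k hw_nonneg)) hJ_sub.eventuallyLE

end Average

/-- for `w` a weight, `u = Σ_{I∈𝒫_k} ⟨w⟩_I χ_I`, and a bounded interval `J`
with `|J| > 2^{-k}`, one has `⟨u⟩_J ≤ 3⟨w⟩_{J*}`. -/
theorem avg_dyadicAvg_le_three_avg_envelope
    (w : ℝ → ℝ) (hw_nonneg : ∀ x, 0 ≤ w x) (hw_loc : LocallyIntegrable w volume)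
    (k : ℤ) (a b : ℝ) (hJ : (2 : ℝ) ^ (-k) < b - a) :
    (b - a)⁻¹ * ∫ x in Set.Ioc a b, dyadicAvg w k x ≤
      3 * (((volume (dyadicEnvelope k (Set.Ioc a b))).toReal)⁻¹ *
        ∫ x in dyadicEnvelope k (Set.Ioc a b), w x) := by
  have hδ : (0 : ℝ) < 2 ^ (-k) := zpow_pos two_pos _
  set V := (volume (dyadicEnvelope k (Ioc a b))).toReal
  have hV_le : V ≤ b - a + 2 * 2 ^ (-k) :=
    ENNReal.toReal_le_of_le_ofReal (by linarith) (volume_dyadicEnvelope_Ioc_le k a b)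
  have hV_ge : b - a ≤ V := by
    have hfin := ((volume_dyadicEnvelope_Ioc_le k a b).trans_lt ENNReal.ofReal_lt_top).ne
    rw [← ENNReal.ofReal_le_iff_le_toReal hfin, ← Real.volume_Ioc]
    exact measure_mono (subset_dyadicEnvelope k _)
  have hinv : (b - a)⁻¹ ≤ 3 * V⁻¹ := by
    rw [inv_eq_one_div, ← div_eq_mul_inv, div_le_div_iff₀ (by linarith) (by linarith)]
    linarith
  have hW : 0 ≤ ∫ x in dyadicEnvelope k (Ioc a b), w x :=
    setIntegral_nonneg (measurableSet_dyadicEnvelope k _) fun x _ => hw_nonneg x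
  calc (b - a)⁻¹ * ∫ x in Ioc a b, dyadicAvg w k x
      ≤ (b - a)⁻¹ * ∫ x in dyadicEnvelope k (Ioc a b), w x :=
        mul_le_mul_of_nonneg_left (setIntegral_dyadicAvg_le_setIntegral_dyadicEnvelope w k
          hw_nonneg hw_loc (Metric.isBounded_Ioc a b)) (inv_nonneg.2 (by linarith))
    _ ≤ 3 * V⁻¹ * ∫ x in dyadicEnvelope k (Ioc a b), w x := mul_le_mul_of_nonneg_right hinv hW
    _ = _ := mul_assoc _ _ _
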